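/- Let ℓ ≥ 3 be an integer and k a field. Define the field K = k(y, y₁, z) with the single relation zℓ·(y₁² + y₁) = y² + y (i.e. K is the fraction field of k[y, y₁, z]/(zℓ(y₁²+y₁) - y² - y), assuming this is an integral domain). Then K is a purely transcendental extension of k of transcendence degree 2; equivalently, the surface defined by zℓ(y₁²+y₁) = y²+y is rational. -/

import Mathlib

/-!
Over the `z`-line the surface is a conic bundle with the section `(y, y₁) = (0, 0)`. Projecting
each conic from that point, `t = y / y₁`, gives `y₁ = (z^ℓ - t) / (t² - z^ℓ)` and `y = t y₁`, so
`k(y, y₁, z) = k(z, t)`. To see that `z` and `t` are algebraically independent, send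
`k[y, y₁, z][1/y₁]` to `k(u, v)` by this parametrisation with `(z, t) = (u, v)`: composed with
`k[u, v] → k[y, y₁, z][1/y₁]`, `u ↦ z`, `v ↦ y / y₁`, it is the inclusion `k[u, v] → k(u, v)`.
-/

open MvPolynomial

theorem IsLocalization.lift_injective_of_injective {R S P : Type*} [CommRing R] [CommRing S]
    [Algebra R S] [CommRing P] {M : Submonoid R} [IsLocalization M S] {g : R →+* P}
    (hg : ∀ y : M, IsUnit (g y)) (hinj : Function.Injective g) :
    Function.Injective (IsLocalization.lift hg : S →+* P) :=
  (IsLocalization.lift_injective_iff hg).mpr fun x y =>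
    ⟨fun h => by rw [← IsLocalization.lift_eq (S := S) hg x, h, IsLocalization.lift_eq],
      fun h => congrArg _ (hinj h)⟩

theorem IsLocalization.Away.map_mul_invSelf_pow {R S F G : Type*} [CommRing R] [CommRing S]
    [Algebra R S] [Field F] [FunLike G S F] [RingHomClass G S F] (s : R)
    [IsLocalization.Away s S] (g : G) (a : R) (n : ℕ) :
    g (algebraMap R S a * IsLocalization.Away.invSelf s ^ n) =
      g (algebraMap R S a) / g (algebraMap R S s) ^ n := by
  have hinv : g (IsLocalization.Away.invSelf s) = (g (algebraMap R S s))⁻¹ :=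
    eq_inv_of_mul_eq_one_left <| by
      rw [← map_mul, mul_comm, IsLocalization.Away.mul_invSelf, map_one]
  rw [map_mul, map_pow, hinv, inv_pow, div_eq_mul_inv]

theorem IsLocalization.Away.liftAlgHom_comp_aeval {k Q S F ι : Type*} [Field k] [CommRing Q]
    [Algebra k Q] [CommRing S] [Algebra k S] [Algebra Q S] [IsScalarTower k Q S] [Field F]
    [Algebra k F] (s : Q) [IsLocalization.Away s S] {β : Q →ₐ[k] F} (hs : IsUnit (β s))
    (q : ι → Q) (n : ι → ℕ) :
    (IsLocalization.Away.liftAlgHom s hs).comp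
        (aeval fun i => algebraMap Q S (q i) * IsLocalization.Away.invSelf s ^ n i) =
      aeval fun i => β (q i) / β s ^ n i := by
  ext i
  simp only [AlgHom.comp_apply, aeval_X, IsLocalization.Away.map_mul_invSelf_pow,
    IsLocalization.Away.liftAlgHom_apply, IsLocalization.Away.lift_eq]
  rfl

/-- Both sides factor through `Q[1/s]`, via `u_i ↦ q_i / s^{n_i}`; the map to `F₁` is injective
on `Q[1/s]`, so independence in `F₂` forces the common factor `k[u_i] → Q[1/s]` to be injective. -/
theorem AlgebraicIndependent.of_specialization {k Q F₁ F₂ ι : Type*} [Field k] [CommRing Q]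
    [Algebra k Q] [Field F₁] [Algebra k F₁] [Field F₂] [Algebra k F₂]
    {β₁ : Q →ₐ[k] F₁} (hβ₁ : Function.Injective β₁) (β₂ : Q →ₐ[k] F₂) {s : Q} (hs : β₂ s ≠ 0)
    (q : ι → Q) (n : ι → ℕ) (h : AlgebraicIndependent k fun i => β₂ (q i) / β₂ s ^ n i) :
    AlgebraicIndependent k fun i => β₁ (q i) / β₁ s ^ n i := by
  have hs₁ : β₁ s ≠ 0 := (map_ne_zero_iff _ hβ₁).mpr (ne_zero_of_map hs)
  have hlift_inj : Function.Injective
      (IsLocalization.Away.liftAlgHom (S := Localization.Away s) s hs₁.isUnit) :=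
    IsLocalization.lift_injective_of_injective (g := β₁.toRingHom) _ hβ₁
  rw [algebraicIndependent_iff_injective_aeval,
    ← IsLocalization.Away.liftAlgHom_comp_aeval (S := Localization.Away s) s hs.isUnit,
    AlgHom.coe_comp] at h
  rw [algebraicIndependent_iff_injective_aeval,
    ← IsLocalization.Away.liftAlgHom_comp_aeval (S := Localization.Away s) s hs₁.isUnit,
    AlgHom.coe_comp]
  exact hlift_inj.comp h.of_comp

theorem IsFractionRing.surjective_of_algebraMap_mem_range {R K L : Type*} [CommRing R] [Field K]
    [Algebra R K] [IsFractionRing R K] [Field L] (φ : L →+* K)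
    (h : ∀ r : R, algebraMap R K r ∈ Set.range φ) : Function.Surjective φ := by
  intro x
  obtain ⟨a, b, -, rfl⟩ := IsFractionRing.div_surjective (A := R) x
  obtain ⟨a', ha'⟩ := h a
  obtain ⟨b', hb'⟩ := h b
  exact ⟨a' / b', by rw [map_div₀, ha', hb']⟩

theorem MvPolynomial.X_pow_ne_X_pow {σ R : Type*} [CommSemiring R] [Nontrivial R] {i j : σ}
    (hij : i ≠ j) {a : ℕ} (ha : a ≠ 0) (b : ℕ) : (X i : MvPolynomial σ R) ^ a ≠ X j ^ b := by
  rw [X_pow_eq_monomial, X_pow_eq_monomial, Ne, monomial_left_inj one_ne_zero]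
  intro h
  exact ha (by simpa [Finsupp.single_apply, hij] using congrArg (· i) h)

theorem IsFractionRing.algebraMap_X_pow_ne {σ k L : Type*} [Field k] [Field L]
    [Algebra (MvPolynomial σ k) L] [IsFractionRing (MvPolynomial σ k) L] {i j : σ} (hij : i ≠ j)
    {a : ℕ} (ha : a ≠ 0) (b : ℕ) :
    algebraMap (MvPolynomial σ k) L (X i) ^ a ≠ algebraMap (MvPolynomial σ k) L (X j) ^ b := by
  simpa only [← map_pow] using
    (IsFractionRing.injective (MvPolynomial σ k) L).ne (X_pow_ne_X_pow hij ha b)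

section Surface

variable {R F : Type*} [CommRing R] [Field F] (ℓ : ℕ)

/-- `p = (y, y₁, z)` lies on the surface `z^ℓ (y₁² + y₁) = y² + y`. -/
def OnSurface (p : Fin 3 → R) : Prop :=
  p 0 ^ 2 + p 0 = p 2 ^ ℓ * (p 1 ^ 2 + p 1)

/-- Over the fibre `z`, the line `y = t y₁` through the point `(0, 0)` of the conic
`y² + y = z^ℓ (y₁² + y₁)` meets it again at `y₁ = (z^ℓ - t) / (t² - z^ℓ)`. -/
def surfacePoint (z t : F) : Fin 3 → F :=
  ![t * ((z ^ ℓ - t) / (t ^ 2 - z ^ ℓ)), (z ^ ℓ - t) / (t ^ 2 - z ^ ℓ), z]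

variable {ℓ}

theorem onSurface_surfacePoint {z t : F} (h : t ^ 2 ≠ z ^ ℓ) :
    OnSurface ℓ (surfacePoint ℓ z t) := by
  have : t ^ 2 - z ^ ℓ ≠ 0 := sub_ne_zero.mpr h
  simp only [OnSurface, surfacePoint, Matrix.cons_val]
  field_simp
  ring

theorem surfacePoint_one_ne_zero {z t : F} (ht : t ≠ z ^ ℓ) (h : t ^ 2 ≠ z ^ ℓ) :
    surfacePoint ℓ z t 1 ≠ 0 :=
  div_ne_zero (sub_ne_zero.mpr ht.symm) (sub_ne_zero.mpr h)

theorem surfacePoint_two (z t : F) : surfacePoint ℓ z t 2 = z := rfl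

theorem surfacePoint_zero_div_one {z t : F} (h : surfacePoint ℓ z t 1 ≠ 0) :
    surfacePoint ℓ z t 0 / surfacePoint ℓ z t 1 = t :=
  mul_div_cancel_right₀ t h

theorem surfacePoint_eq {p : Fin 3 → F} (hp : OnSurface ℓ p) (hp₁ : p 1 ≠ 0)
    (h : (p 0 / p 1) ^ 2 ≠ p 2 ^ ℓ) : surfacePoint ℓ (p 2) (p 0 / p 1) = p := by
  rw [OnSurface] at hp
  have hp₁' : surfacePoint ℓ (p 2) (p 0 / p 1) 1 = p 1 := by
    simp only [surfacePoint, Matrix.cons_val]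
    rw [div_eq_iff (sub_ne_zero.mpr h)]
    field_simp
    linear_combination -hp
  funext j
  fin_cases j
  · simp only [surfacePoint, Matrix.cons_val] at hp₁' ⊢
    rw [hp₁', div_mul_cancel₀ _ hp₁]
    rfl
  · exact hp₁'
  · rfl

theorem map_surfacePoint {F' G : Type*} [Field F'] [FunLike G F F'] [RingHomClass G F F'] (f : G)
    (z t : F) (j : Fin 3) : f (surfacePoint ℓ z t j) = surfacePoint ℓ (f z) (f t) j := by
  fin_cases j <;> simp [surfacePoint, map_div₀]

end Surface

section SurfaceRing

variable (k : Type*) [Field k] (ℓ : ℕ)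

noncomputable abbrev surfaceIdeal : Ideal (MvPolynomial (Fin 3) k) :=
  Ideal.span {X 2 ^ ℓ * (X 1 ^ 2 + X 1) - (X 0 ^ 2 + X 0)}

variable {k ℓ}

theorem onSurface_mk_X {R : Type*} [CommRing R] [Algebra k R]
    (g : MvPolynomial (Fin 3) k ⧸ surfaceIdeal k ℓ →ₐ[k] R) :
    OnSurface ℓ fun j => g (Ideal.Quotient.mk _ (X j)) := by
  have h : g (Ideal.Quotient.mk (surfaceIdeal k ℓ)
      (X 2 ^ ℓ * (X 1 ^ 2 + X 1) - (X 0 ^ 2 + X 0))) = 0 := by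
    rw [Ideal.Quotient.eq_zero_iff_mem.mpr (Ideal.mem_span_singleton_self _), map_zero]
  simp only [map_sub, map_mul, map_pow, map_add] at h
  exact (sub_eq_zero.mp h).symm

variable {F : Type*} [Field F] [Algebra k F] {z t : F}

variable (k) in
noncomputable def surfaceParam (h : t ^ 2 ≠ z ^ ℓ) :
    MvPolynomial (Fin 3) k ⧸ surfaceIdeal k ℓ →ₐ[k] F :=
  Ideal.Quotient.liftₐ _ (aeval (surfacePoint ℓ z t)) fun g hg => by
    obtain ⟨c, rfl⟩ := Ideal.mem_span_singleton'.mp hg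
    have hp := onSurface_surfacePoint h
    rw [OnSurface] at hp
    rw [map_mul]
    refine mul_eq_zero_of_right _ ?_
    simp only [map_sub, map_add, map_mul, map_pow, aeval_X]
    exact sub_eq_zero.mpr hp.symm

theorem surfaceParam_mk_X (h : t ^ 2 ≠ z ^ ℓ) (j : Fin 3) :
    surfaceParam k h (Ideal.Quotient.mk _ (X j)) = surfacePoint ℓ z t j :=
  (Ideal.Quotient.lift_mk _ _ _).trans (aeval_X _ _)

theorem comp_surfaceParam_eq {K : Type*} [Field K] [Algebra k K] (h : t ^ 2 ≠ z ^ ℓ)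
    (g : MvPolynomial (Fin 3) k ⧸ surfaceIdeal k ℓ →ₐ[k] K) (φ : F →ₐ[k] K)
    (hz : φ z = g (Ideal.Quotient.mk _ (X 2)))
    (ht : φ t = g (Ideal.Quotient.mk _ (X 0)) / g (Ideal.Quotient.mk _ (X 1)))
    (h₁ : g (Ideal.Quotient.mk _ (X 1)) ≠ 0) : φ.comp (surfaceParam k h) = g := by
  have hne : (g (Ideal.Quotient.mk _ (X 0)) / g (Ideal.Quotient.mk _ (X 1))) ^ 2 ≠
      g (Ideal.Quotient.mk _ (X 2)) ^ ℓ := by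
    rw [← hz, ← ht, ← map_pow, ← map_pow]
    exact φ.toRingHom.injective.ne h
  refine Ideal.Quotient.algHom_ext k (algHom_ext fun j => ?_)
  simp only [AlgHom.comp_apply, Ideal.Quotient.mkₐ_eq_mk, surfaceParam_mk_X, map_surfacePoint,
    hz, ht]
  exact congrFun (surfacePoint_eq (onSurface_mk_X g) h₁ hne) j

theorem algebraicIndependent_paramCoords {K : Type*} [Field K] [Algebra k K]
    {g : MvPolynomial (Fin 3) k ⧸ surfaceIdeal k ℓ →ₐ[k] K} (hg : Function.Injective g)
    {x : Fin 2 → F} (hx : AlgebraicIndependent k x) (h : x 1 ^ 2 ≠ x 0 ^ ℓ) (h' : x 1 ≠ x 0 ^ ℓ) :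
    AlgebraicIndependent k ![g (Ideal.Quotient.mk _ (X 2)),
      g (Ideal.Quotient.mk _ (X 0)) / g (Ideal.Quotient.mk _ (X 1))] := by
  have hw := surfacePoint_one_ne_zero h' h
  have := AlgebraicIndependent.of_specialization hg (surfaceParam k h)
    (s := Ideal.Quotient.mk _ (X 1)) (by rwa [surfaceParam_mk_X])
    ![Ideal.Quotient.mk _ (X 2), Ideal.Quotient.mk _ (X 0)] ![0, 1] <| by
      convert hx using 1
      funext i
      fin_cases i <;> simp [surfaceParam_mk_X, surfacePoint_two, surfacePoint_zero_div_one hw]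
  convert this using 1
  funext i
  fin_cases i <;> simp

end SurfaceRing

theorem stmt_3_general (k : Type*) [Field k] (ℓ : ℕ)
    (Q : Type*) [CommRing Q] [Algebra k Q]
    (e : Q ≃ₐ[k] (MvPolynomial (Fin 3) k ⧸
      Ideal.span {(X 2 : MvPolynomial (Fin 3) k) ^ ℓ * ((X 1) ^ 2 + X 1)
        - ((X 0) ^ 2 + X 0)}))
    (K L : Type*) [Field K] [Field L]
    [Algebra k K] [Algebra k L]
    [Algebra Q K] [IsScalarTower k Q K] [IsFractionRing Q K]
    [Algebra (MvPolynomial (Fin 2) k) L] [IsScalarTower k (MvPolynomial (Fin 2) k) L]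
    [IsFractionRing (MvPolynomial (Fin 2) k) L] :
    Nonempty (K ≃ₐ[k] L) := by
  let x (i : Fin 2) : L := algebraMap (MvPolynomial (Fin 2) k) L (X i)
  have hx : AlgebraicIndependent k x :=
    (algebraicIndependent_X (Fin 2) k).map' (f := IsScalarTower.toAlgHom k _ L)
      (IsFractionRing.injective _ L)
  have h₂ : x 1 ^ 2 ≠ x 0 ^ ℓ := IsFractionRing.algebraMap_X_pow_ne (by decide) two_ne_zero ℓ
  have h₁ : x 1 ^ 1 ≠ x 0 ^ ℓ := IsFractionRing.algebraMap_X_pow_ne (by decide) one_ne_zero ℓ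
  rw [pow_one] at h₁
  let g := (IsScalarTower.toAlgHom k Q K).comp e.symm.toAlgHom
  have hg : Function.Injective g := (IsFractionRing.injective Q K).comp e.symm.injective
  let φ : L →ₐ[k] K := IsFractionRing.liftAlgHom
    (algebraicIndependent_iff_injective_aeval.mp (algebraicIndependent_paramCoords hg hx h₂ h₁))
  have hφ (i : Fin 2) : φ (x i) = ![g (Ideal.Quotient.mk _ (X 2)),
      g (Ideal.Quotient.mk _ (X 0)) / g (Ideal.Quotient.mk _ (X 1))] i := by
    simp [φ, x, IsFractionRing.liftAlgHom_apply]
  have hg₁ : g (Ideal.Quotient.mk _ (X 1)) ≠ 0 :=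
    (map_ne_zero_iff g hg).mpr <| ne_zero_of_map (f := surfaceParam k h₂) <| by
      rw [surfaceParam_mk_X]
      exact surfacePoint_one_ne_zero h₁ h₂
  have hφg : φ.comp (surfaceParam k h₂) = g := comp_surfaceParam_eq h₂ g φ (hφ 0) (hφ 1) hg₁
  have hφ_surj : Function.Surjective φ :=
    IsFractionRing.surjective_of_algebraMap_mem_range (R := Q) φ.toRingHom fun q =>
      ⟨surfaceParam k h₂ (e q), (AlgHom.congr_fun hφg (e q)).trans (by simp [g])⟩
  exact ⟨(AlgEquiv.ofBijective φ ⟨φ.toRingHom.injective, hφ_surj⟩).symm⟩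

/-- Let ℓ ≥ 3 and k a field. If the quotient of k[y, y₁, z] by the relation
z^ℓ·(y₁² + y₁) = y² + y is a domain, then its fraction field is a purely transcendental
extension of k of transcendence degree 2, i.e. isomorphic as a k-algebra to the fraction
field k(u, v) of the polynomial ring in two variables. -/
theorem stmt_3 (k : Type*) [Field k] (ℓ : ℕ) (hℓ : 3 ≤ ℓ)
    (Q : Type*) [CommRing Q] [IsDomain Q] [Algebra k Q]
    (e : Q ≃ₐ[k] (MvPolynomial (Fin 3) k ⧸
      Ideal.span {(X 2 : MvPolynomial (Fin 3) k) ^ ℓ * ((X 1) ^ 2 + X 1)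
        - ((X 0) ^ 2 + X 0)}))
    (K L : Type*) [Field K] [Field L]
    [Algebra k K] [Algebra k L]
    [Algebra Q K] [IsScalarTower k Q K] [IsFractionRing Q K]
    [Algebra (MvPolynomial (Fin 2) k) L] [IsScalarTower k (MvPolynomial (Fin 2) k) L]
    [IsFractionRing (MvPolynomial (Fin 2) k) L] :
    Nonempty (K ≃ₐ[k] L) :=
  stmt_3_general k ℓ Q e K L
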